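/- The map π : \widehat{T}_n → \widehat{T}_n is a bijection. -/

import Mathlib

/-- Plane binary trees: every internal vertex has exactly two ordered children. -/
inductive PTree where
  | leaf : PTree
  | node : PTree → PTree → PTree
  deriving DecidableEq

namespace PTree

/-- number of leaves (endpoints) -/
def numLeaves : PTree → ℕ
  | leaf => 1
  | node l r => numLeaves l + numLeaves r

/-- directions of the leaves of a subtree which is itself a `b`-child
(`true` = left child, `false` = right child), in left-to-right order. -/
def dirsAux : PTree → Bool → List Bool
  | leaf, b => [b]
  | node l r, _ => dirsAux l true ++ dirsAux r false

/-- the left/right-child directions of all leaves of a tree, left to right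
(`true` = left child, `false` = right child). -/
def dirs : PTree → List Bool
  | leaf => []
  | node l r => dirsAux l true ++ dirsAux r false

/-- The reduction map `R`: the directions of the 2nd through (n+1)-th leaves;
`true` = • (occupied site, left child), `false` = ∘ (empty site, right child). -/
def red (T : PTree) : List Bool := ((dirs T).drop 1).dropLast

/-- number of internal vertices on the path from the leftmost leaf to the root
(root included). -/
def lCount : PTree → ℕ
  | leaf => 0
  | node l _ => lCount l + 1

/-- number of internal vertices on the path from the rightmost leaf to the root
(root included). -/
def rCount : PTree → ℕ
  | leaf => 0
  | node _ r => rCount r + 1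

/-- number of last branching vertices (internal vertices whose two children are leaves). -/
def lbCount : PTree → ℕ
  | leaf => 0
  | node leaf leaf => 1
  | node l r => lbCount l + lbCount r

end PTree

/-- Marked plane binary trees: a plane binary tree with exactly one of its
last branching vertices marked (the constructor `mark` is the marked vertex,
a vertex with two leaf children). -/
inductive MTree where
  | mark : MTree
  | nodeL : MTree → PTree → MTree
  | nodeR : PTree → MTree → MTree
  deriving DecidableEq

namespace MTree

/-- forgetful map to plane binary trees -/
def forget : MTree → PTree
  | mark => .node .leaf .leaf
  | nodeL l r => .node (forget l) r
  | nodeR l r => .node l (forget r)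

/-- collapse the marked vertex (with its two leaf children) to a single leaf. -/
def collapseT : MTree → PTree
  | mark => .leaf
  | nodeL l r => .node (collapseT l) r
  | nodeR l r => .node l (collapseT r)

/-- index (left to right, starting from 0) of the leaf of `collapseT` obtained
by collapsing the marked vertex. -/
def markIdx : MTree → ℕ
  | mark => 0
  | nodeL l _ => markIdx l
  | nodeR l r => l.numLeaves + markIdx r

end MTree

/-- replace the `i`-th leaf of a tree by a marked last branching vertex. -/
def expand : PTree → ℕ → MTree
  | .leaf, _ => .mark
  | .node l r, i =>
      if i < l.numLeaves then .nodeL (expand l i) r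
      else .nodeR l (expand r (i - l.numLeaves))

/-- index of the next right-child (`false`) leaf strictly after position `i`;
if there is none, the index of the rightmost left-child (`true`) leaf. -/
def nextFalseIdx (w : List Bool) (i : ℕ) : ℕ :=
  if (w.drop (i+1)).findIdx (fun b => !b) < (w.drop (i+1)).length
  then i + 1 + (w.drop (i+1)).findIdx (fun b => !b)
  else w.length - 1 - (w.reverse.findIdx (fun b => b))

/-- index of the closest left-child (`true`) leaf strictly before position `i`;
if there is none, the index of the leftmost right-child (`false`) leaf. -/
def prevTrueIdx (w : List Bool) (i : ℕ) : ℕ :=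
  if ((w.take i).reverse).findIdx (fun b => b) < i
  then i - 1 - ((w.take i).reverse).findIdx (fun b => b)
  else w.findIdx (fun b => !b)

/-- position of the leaf where the removed segment is re-glued by `π`. -/
def target (w : List Bool) (i : ℕ) : ℕ :=
  if w.getD i true then prevTrueIdx w i else nextFalseIdx w i

/-- The map `π` on marked trees: remove the segment joining the marked vertex to
its left (resp. right) leaf when the marked vertex is a right (resp. left) child,
and glue it to the next right- (resp. left-) child leaf to the right (resp. left),
with the boundary rule when no such leaf exists; the new vertex is marked. -/
def piM (M : MTree) : MTree :=
  expand M.collapseT (target M.collapseT.dirs M.markIdx)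

open Classical in
/-- Transition rates of the `n`-site open-boundary TASEP, on configurations
encoded as lists of booleans (`true` = •, `false` = ∘). -/
noncomputable def rate (α β : ℝ) (C C' : List Bool) : ℝ :=
  if ∃ A, C = false :: A ∧ C' = true :: A then α
  else if ∃ A, C = A ++ [true] ∧ C' = A ++ [false] then β
  else if ∃ A A', C = A ++ true :: false :: A' ∧ C' = A ++ false :: true :: A' then 1
  else 0

/-- number of active bonds of a configuration: injection at site 1 if empty,
extraction at site n if occupied, and hops across •∘ pairs. -/
def activeCount (C : List Bool) : ℕ :=
  (if C.head? = some false then 1 else 0) +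
  ((C.zip C.tail).count (true, false)) +
  (if C.getLast? = some true then 1 else 0)

/-- the weight `μ(T) = α^{-l(T)} β^{-r(T)}` of a plane binary tree. -/
noncomputable def mu (α β : ℝ) (T : PTree) : ℝ :=
  α ^ (-(T.lCount : ℤ)) * β ^ (-(T.rCount : ℤ))

/-- number of internal vertices on the path from the leftmost leaf to the root,
excluding the marked vertex. -/
def lCountM : MTree → ℕ
  | .mark => 0
  | .nodeL l _ => lCountM l + 1
  | .nodeR l _ => l.lCount + 1

/-- number of internal vertices on the path from the rightmost leaf to the root,
excluding the marked vertex. -/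
def rCountM : MTree → ℕ
  | .mark => 0
  | .nodeR _ r => rCountM r + 1
  | .nodeL _ r => r.rCount + 1

/-- the weight `μ̂` of a marked tree, excluding the marked vertex from the counts. -/
noncomputable def muHat (α β : ℝ) (M : MTree) : ℝ :=
  α ^ (-(lCountM M : ℤ)) * β ^ (-(rCountM M : ℤ))

/-!
Collapsing the marked vertex to a leaf identifies a marked tree with a plane binary tree together
with one of its leaves; `π` keeps the tree and moves the chosen leaf by `target` on the list of
leaf directions. `target` runs leftwards through the `true` (left-child) leaves, jumps from the
leftmost of them to the leftmost `false` leaf, runs rightwards through the `false` leaves and jumps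
from the last one back to the rightmost `true` leaf. This is a single cycle through all leaves, so
each leaf has exactly one preimage, and `π` is a permutation on each fibre of the collapse map.
-/

namespace List

variable {α : Type*} {p : α → Bool} {a : α} {l : List α} {k : ℕ}

theorem getElem?_findIdx_eq_some (hp : ∀ x, p x ↔ x = a) (h : l.findIdx p < l.length) :
    l[l.findIdx p]? = some a := by
  rw [getElem?_eq_getElem h, (hp _).1 findIdx_getElem]

theorem getElem?_ne_some_of_lt_findIdx (ha : p a) (hk : k < l.findIdx p) : l[k]? ≠ some a := by
  intro hka
  obtain ⟨hkl, rfl⟩ := getElem?_eq_some_iff.1 hka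
  simp [not_of_lt_findIdx hk] at ha

theorem getElem?_sub_findIdx_reverse_eq_some (hp : ∀ x, p x ↔ x = a)
    (h : l.reverse.findIdx p < l.length) :
    l[l.length - 1 - l.reverse.findIdx p]? = some a := by
  rw [← getElem?_reverse h]
  exact getElem?_findIdx_eq_some hp (by simpa using h)

theorem getElem?_ne_some_of_sub_findIdx_reverse_lt (ha : p a)
    (hk : l.length - 1 - l.reverse.findIdx p < k) : l[k]? ≠ some a := by
  rcases lt_or_ge k l.length with hkl | hkl
  · have := getElem?_ne_some_of_lt_findIdx (l := l.reverse) (k := l.length - 1 - k) ha (by omega)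
    rwa [getElem?_reverse (by omega), show l.length - 1 - (l.length - 1 - k) = k by omega] at this
  · simp [getElem?_eq_none hkl]

end List

/-- `j` follows `i` in the cycle traced by `target w`; the constructors are the four cases of
`prevTrueIdx` and `nextFalseIdx`. -/
inductive CycleSucc (w : List Bool) (i j : ℕ) : Prop
  | prevTrue : w[i]? = some true → w[j]? = some true → j < i →
      (∀ k, j < k → k < i → w[k]? ≠ some true) → CycleSucc w i j
  | firstFalse : w[i]? = some true → w[j]? = some false →
      (∀ k < i, w[k]? ≠ some true) → (∀ k < j, w[k]? ≠ some false) → CycleSucc w i j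
  | nextFalse : w[i]? = some false → w[j]? = some false → i < j →
      (∀ k, i < k → k < j → w[k]? ≠ some false) → CycleSucc w i j
  | lastTrue : w[i]? = some false → w[j]? = some true →
      (∀ k, i < k → w[k]? ≠ some false) → (∀ k, j < k → w[k]? ≠ some true) →
      CycleSucc w i j

namespace CycleSucc

variable {w : List Bool} {i j t : ℕ}

theorem lt_length (h : CycleSucc w i j) : j < w.length := by
  rcases h with ⟨-, h, -⟩ | ⟨-, h, -⟩ | ⟨-, h, -⟩ | ⟨-, h, -⟩ <;>
    exact (List.getElem?_eq_some_iff.1 h).1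

-- Each constructor pins `i` down as the nearest position of its kind next to `t`.
theorem left_unique (hi : CycleSucc w i t) (hj : CycleSucc w j t) : i = j := by
  cases hi <;> cases hj <;> grind

end CycleSucc

section

variable {w : List Bool} {i : ℕ}

theorem cycleSucc_prevTrueIdx (hi : w[i]? = some true) (hf : false ∈ w) :
    CycleSucc w i (prevTrueIdx w i) := by
  have hu : (w.take i).length = i := by simp [(List.getElem?_eq_some_iff.1 hi).1.le]
  have hget : ∀ k < i, (w.take i)[k]? = w[k]? := fun k hk => by simp [hk]
  unfold prevTrueIdx
  split_ifs with h
  · refine .prevTrue hi ?_ (by omega) fun k hk hki => ?_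
    · have := List.getElem?_sub_findIdx_reverse_eq_some (p := fun b => b) (a := true)
        (l := w.take i) (fun x => by simp) (by rwa [hu])
      rwa [hu, hget _ (by omega)] at this
    · rw [← hget k hki]
      exact List.getElem?_ne_some_of_sub_findIdx_reverse_lt (p := fun b => b) rfl (by rwa [hu])
  · have hnt : true ∉ w.take i := fun ht => h <| by
      simpa [hu] using List.findIdx_lt_length_of_exists (p := fun b => b)
        (xs := (w.take i).reverse) ⟨true, List.mem_reverse.2 ht, rfl⟩
    refine .firstFalse hi ?_ (fun k hk hwk => hnt ?_) fun k hk => ?_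
    · exact List.getElem?_findIdx_eq_some (fun x => by simp)
        (List.findIdx_lt_length_of_exists ⟨false, hf, rfl⟩)
    · exact List.mem_of_getElem? ((hget k hk).trans hwk)
    · exact List.getElem?_ne_some_of_lt_findIdx (p := fun b => !b) rfl hk

theorem cycleSucc_nextFalseIdx (hi : w[i]? = some false) (ht : true ∈ w) :
    CycleSucc w i (nextFalseIdx w i) := by
  have hget : ∀ k, i < k → ∃ m, w[k]? = (w.drop (i + 1))[m]? ∧ k = i + 1 + m := by
    intro k hk
    obtain ⟨m, rfl⟩ := Nat.exists_eq_add_of_le hk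
    exact ⟨m, List.getElem?_drop.symm, rfl⟩
  unfold nextFalseIdx
  split_ifs with h
  · refine .nextFalse hi ?_ (by omega) fun k hik hk => ?_
    · rw [← List.getElem?_drop]
      exact List.getElem?_findIdx_eq_some (fun x => by simp) h
    · obtain ⟨m, hm, rfl⟩ := hget k hik
      rw [hm]
      exact List.getElem?_ne_some_of_lt_findIdx (p := fun b => !b) rfl (by omega)
  · have hnf : false ∉ w.drop (i + 1) := fun hf =>
      h (List.findIdx_lt_length_of_exists ⟨false, hf, rfl⟩)
    refine .lastTrue hi ?_ (fun k hik hwk => hnf ?_) fun k hk => ?_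
    · refine List.getElem?_sub_findIdx_reverse_eq_some (fun x => by simp) ?_
      simpa using List.findIdx_lt_length_of_exists (p := fun b => b) (xs := w.reverse)
        ⟨true, List.mem_reverse.2 ht, rfl⟩
    · obtain ⟨m, hm, rfl⟩ := hget k hik
      exact List.mem_of_getElem? (hm.symm.trans hwk)
    · exact List.getElem?_ne_some_of_sub_findIdx_reverse_lt (p := fun b => b) rfl hk

theorem cycleSucc_target (hi : i < w.length) (ht : true ∈ w) (hf : false ∈ w) :
    CycleSucc w i (target w i) := by
  have hwi := List.getElem?_eq_getElem hi
  cases hb : w[i] <;> rw [hb] at hwi <;>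
    simp only [target, List.getD_eq_getElem?_getD, hwi, Option.getD_some]
  · exact cycleSucc_nextFalseIdx hwi ht
  · exact cycleSucc_prevTrueIdx hwi hf

end

namespace PTree

theorem length_dirsAux (T : PTree) (b : Bool) : (T.dirsAux b).length = T.numLeaves := by
  induction T generalizing b with
  | leaf => rfl
  | node l r ihl ihr => simp [dirsAux, numLeaves, ihl, ihr]

theorem mem_dirsAux_self (T : PTree) (b : Bool) : b ∈ T.dirsAux b := by
  induction T generalizing b with
  | leaf => simp [dirsAux]
  | node l r ihl ihr => cases b <;> simp [dirsAux, ihl, ihr]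

theorem cycleSucc_target_dirs_node (l r : PTree) {i : ℕ} (hi : i < (node l r).numLeaves) :
    CycleSucc (node l r).dirs i (target (node l r).dirs i) :=
  cycleSucc_target (by simpa [dirs, numLeaves, length_dirsAux] using hi)
    (by simp [dirs, mem_dirsAux_self]) (by simp [dirs, mem_dirsAux_self])

theorem target_dirs_lt_numLeaves (T : PTree) {i : ℕ} (hi : i < T.numLeaves) :
    target T.dirs i < T.numLeaves := by
  cases T with
  | leaf =>
    obtain rfl : i = 0 := by simpa [numLeaves] using hi
    decide
  | node l r =>
    simpa [dirs, numLeaves, length_dirsAux] using (cycleSucc_target_dirs_node l r hi).lt_length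

def targetLeaf (T : PTree) (i : Fin T.numLeaves) : Fin T.numLeaves :=
  ⟨target T.dirs i, T.target_dirs_lt_numLeaves i.2⟩

theorem targetLeaf_bijective (T : PTree) : Function.Bijective T.targetLeaf := by
  refine Finite.injective_iff_bijective.1 fun i j h => Fin.ext ?_
  cases T with
  | leaf => have := i.2; have := j.2; simp only [numLeaves] at *; omega
  | node l r =>
    have hij : target (node l r).dirs i = target (node l r).dirs j := congrArg Fin.val h
    exact (cycleSucc_target_dirs_node l r i.2).left_unique
      (hij ▸ cycleSucc_target_dirs_node l r j.2)

end PTree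

namespace MTree

theorem markIdx_lt_numLeaves (M : MTree) : M.markIdx < M.collapseT.numLeaves := by
  induction M with
  | mark => exact Nat.one_pos
  | nodeL l r ih => exact Nat.lt_add_right _ ih
  | nodeR l r ih => exact Nat.add_lt_add_left ih _

theorem numLeaves_forget (M : MTree) : M.forget.numLeaves = M.collapseT.numLeaves + 1 := by
  induction M with
  | mark => rfl
  | nodeL l r ih | nodeR l r ih => simp only [forget, collapseT, PTree.numLeaves, ih]; omega

theorem expand_collapseT_markIdx (M : MTree) : expand M.collapseT M.markIdx = M := by
  induction M with
  | mark => rfl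
  | nodeL l r ih => simp [collapseT, markIdx, expand, l.markIdx_lt_numLeaves, ih]
  | nodeR l r ih => simp [collapseT, markIdx, expand, ih]

end MTree

theorem collapseT_expand (T : PTree) (i : ℕ) : (expand T i).collapseT = T := by
  induction T generalizing i with
  | leaf => rfl
  | node l r ihl ihr => unfold expand; split_ifs <;> simp [MTree.collapseT, ihl, ihr]

theorem markIdx_expand {T : PTree} {i : ℕ} (hi : i < T.numLeaves) : (expand T i).markIdx = i := by
  induction T generalizing i with
  | leaf => simp only [PTree.numLeaves] at hi; simp only [expand, MTree.markIdx]; omega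
  | node l r ihl ihr =>
    simp only [PTree.numLeaves] at hi
    unfold expand
    split_ifs with h
    · exact ihl h
    · simp only [MTree.markIdx, ihr (by omega : i - l.numLeaves < r.numLeaves)]; omega

def MTree.equivSigmaLeaf : MTree ≃ Σ T : PTree, Fin T.numLeaves where
  toFun M := ⟨M.collapseT, M.markIdx, M.markIdx_lt_numLeaves⟩
  invFun p := expand p.1 p.2
  left_inv := MTree.expand_collapseT_markIdx
  right_inv := fun ⟨T, i⟩ => Sigma.ext (collapseT_expand T i)
    ((Fin.heq_ext_iff (congrArg PTree.numLeaves (collapseT_expand T i))).2 (markIdx_expand i.2))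

noncomputable def piEquiv : MTree ≃ MTree :=
  MTree.equivSigmaLeaf.trans <| (Equiv.sigmaCongrRight fun T =>
    Equiv.ofBijective T.targetLeaf T.targetLeaf_bijective).trans MTree.equivSigmaLeaf.symm

theorem coe_piEquiv : ⇑piEquiv = piM := rfl

theorem numLeaves_forget_piM (M : MTree) : (piM M).forget.numLeaves = M.forget.numLeaves := by
  rw [piM, MTree.numLeaves_forget, collapseT_expand, MTree.numLeaves_forget]

/-- `π : \widehat{T}_n → \widehat{T}_n` is a bijection. -/
theorem piM_bijective (n : ℕ) :
    Set.BijOn piM {M : MTree | M.forget.numLeaves = n + 2}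
      {M : MTree | M.forget.numLeaves = n + 2} :=
  coe_piEquiv ▸ piEquiv.bijOn fun M => by simp [coe_piEquiv, numLeaves_forget_piM]
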